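/- Let S be a semigroup, a ∈ S, and a' ∈ V(a)[H]. Then a'a H aa' if and only if a' H a. -/
import Mathlib


variable {S : Type*} [Semigroup S]

/-- Green's preorder `≤_L`: `a ∈ S¹ b`. -/
def leL (a b : S) : Prop := a = b ∨ ∃ x : S, a = x * b
/-- Green's preorder `≤_R`: `a ∈ b S¹`. -/
def leR (a b : S) : Prop := a = b ∨ ∃ x : S, a = b * x
/-- Green's preorder `≤_H`. -/
def leH (a b : S) : Prop := leL a b ∧ leR a b
/-- Green's relation `L`. -/
def grL (a b : S) : Prop := leL a b ∧ leL b a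
/-- Green's relation `R`. -/
def grR (a b : S) : Prop := leR a b ∧ leR b a
/-- Green's relation `H`. -/
def grH (a b : S) : Prop := leH a b ∧ leH b a
/-- `x` is the group inverse of `a`. -/
def IsGrpInv (a x : S) : Prop := a * x = x * a ∧ a * x * a = a ∧ x * a * x = x
/-- `a` is group invertible. -/
def GrpInvertible (a : S) : Prop := ∃ x : S, IsGrpInv a x
/-- `x ∈ V(a)[H]`: inverse of `a` modulo `H`. -/
def VH (a x : S) : Prop := grH (a * x * a) a ∧ grH (x * a * x) x
/-- `x ∈ A(a)[H]`: associate of `a` modulo `H`. -/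
def AH (a x : S) : Prop := grH (a * x * a) a
/-- `x ∈ V(a)`: reflexive inverse of `a`. -/
def refInv (a x : S) : Prop := a * x * a = a ∧ x * a * x = x
/-- The `H`-class of `a`. -/
def Hclass (a : S) : Set S := {b : S | grH b a}

lemma leL_trans' {a b c : S} (h1 : leL a b) (h2 : leL b c) : leL a c := by
  rcases h1 with rfl | ⟨x, rfl⟩
  · exact h2
  · rcases h2 with rfl | ⟨y, rfl⟩
    · exact Or.inr ⟨x, rfl⟩
    · exact Or.inr ⟨x * y, (mul_assoc _ _ _).symm⟩

lemma leR_trans' {a b c : S} (h1 : leR a b) (h2 : leR b c) : leR a c := by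
  rcases h1 with rfl | ⟨x, rfl⟩
  · exact h2
  · rcases h2 with rfl | ⟨y, rfl⟩
    · exact Or.inr ⟨x, rfl⟩
    · exact Or.inr ⟨y * x, mul_assoc _ _ _⟩

lemma grL_trans' {a b c : S} (h1 : grL a b) (h2 : grL b c) : grL a c :=
  ⟨leL_trans' h1.1 h2.1, leL_trans' h2.2 h1.2⟩

lemma grR_trans' {a b c : S} (h1 : grR a b) (h2 : grR b c) : grR a c :=
  ⟨leR_trans' h1.1 h2.1, leR_trans' h2.2 h1.2⟩

lemma grL_symm' {a b : S} (h : grL a b) : grL b a := ⟨h.2, h.1⟩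
lemma grR_symm' {a b : S} (h : grR a b) : grR b a := ⟨h.2, h.1⟩

lemma grH_iff' {a b : S} : grH a b ↔ grL a b ∧ grR a b := by
  unfold grH grL grR leH; tauto

theorem stmt5 (a a' : S) (h : VH a a') :
    grH (a' * a) (a * a') ↔ grH a' a := by
  obtain ⟨h1, h2⟩ := h
  -- grL (a' * a) a
  have hLa : grL (a' * a) a := by
    refine ⟨Or.inr ⟨a', rfl⟩, ?_⟩
    rcases h1.2.1 with he | ⟨x, hx⟩
    · exact Or.inr ⟨a, he.trans (by simp only [mul_assoc])⟩
    · exact Or.inr ⟨x * a, hx.trans (by simp only [mul_assoc])⟩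
  -- grR (a * a') a
  have hRa : grR (a * a') a := by
    refine ⟨Or.inr ⟨a', rfl⟩, ?_⟩
    rcases h1.2.2 with he | ⟨y, hy⟩
    · exact Or.inr ⟨a, he⟩
    · exact Or.inr ⟨a * y, hy.trans (by simp only [mul_assoc])⟩
  -- grR (a' * a) a'
  have hRa' : grR (a' * a) a' := by
    refine ⟨Or.inr ⟨a, rfl⟩, ?_⟩
    rcases h2.2.2 with he | ⟨y, hy⟩
    · exact Or.inr ⟨a', he⟩
    · exact Or.inr ⟨a' * y, hy.trans (by simp only [mul_assoc])⟩
  -- grL (a * a') a'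
  have hLa' : grL (a * a') a' := by
    refine ⟨Or.inr ⟨a, rfl⟩, ?_⟩
    rcases h2.2.1 with he | ⟨x, hx⟩
    · exact Or.inr ⟨a', he.trans (by simp only [mul_assoc])⟩
    · exact Or.inr ⟨x * a', hx.trans (by simp only [mul_assoc])⟩
  rw [grH_iff', grH_iff']
  constructor
  · rintro ⟨hL, hR⟩
    exact ⟨grL_trans' (grL_trans' (grL_symm' hLa') (grL_symm' hL)) hLa,
           grR_trans' (grR_trans' (grR_symm' hRa') hR) hRa⟩
  · rintro ⟨hL, hR⟩
    exact ⟨grL_trans' (grL_trans' hLa (grL_symm' hL)) (grL_symm' hLa'),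
           grR_trans' (grR_trans' hRa' hR) (grR_symm' hRa)⟩
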